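/- Let X be a uniformly convex real Banach space, C a nonempty closed convex subset of X, and T : C → C a Chatterjea mapping satisfying: (H1) for every x ∈ C and every integer k ≥ 2 the sequence n ↦ ‖T^{n+k}x − Tⁿx‖ is decreasing; (H2) there exist an integer k₀ ≥ 1 and a constant M such that ‖Tⁿx − Tⁿy‖ ≤ M‖x − y‖ for all n ≥ k₀ and all x, y ∈ C. Then the following are equivalent: (i) 0 ∈ closure(R(I − T)) and 0 ∉ R(I − T); (ii) for every x ∈ C, ‖Tⁿx‖ → ∞ and ‖Tⁿx‖/n → 0 as n → ∞. -/

import Mathlib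

/-!
Chatterjea's condition gives `2 ‖T^[n+2] x - T^[n+1] x‖ ≤ ‖T^[n+2] x - T^[n] x‖`, so the step
lengths of an orbit decrease and `‖T^[n] y - y‖ ≤ n ‖T y - y‖`; together with (H2) this makes every
orbit grow sublinearly once `T` has approximate fixed points. Conversely, sublinear growth forces
the step lengths to tend to `0`: if they decreased to `d > 0`, uniform convexity would align
consecutive steps, and (H1) would give `k d ≤ ‖T^[k] x - x‖` for all `k`. Finally, an orbit whose
steps tend to `0` and which has a bounded subsequence produces a fixed point: Chatterjea maps satisfy
`‖y - T z‖ ≤ ‖y - z‖ + 3 ‖T y - y‖`, so `T` does not increase the asymptotic radius of that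
subsequence, and in a uniformly convex space its asymptotic center is the unique minimiser.
-/

open Filter Topology Function

section UniformConvexity

variable {E : Type*} [NormedAddCommGroup E] [NormedSpace ℝ E] [UniformConvexSpace E]

theorem exists_forall_norm_add_le_two_sub_mul {ε : ℝ} (hε : 0 < ε) :
    ∃ δ, 0 < δ ∧ ∀ ⦃R : ℝ⦄, 0 < R → ∀ ⦃x y : E⦄, ‖x‖ ≤ R → ‖y‖ ≤ R → ε * R ≤ ‖x - y‖ →
      ‖x + y‖ ≤ (2 - δ) * R := by
  obtain ⟨δ, hδ, h⟩ := exists_forall_closed_ball_dist_add_le_two_sub E hε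
  refine ⟨δ, hδ, fun R hR x y hx hy hxy => ?_⟩
  have hscale : ∀ z : E, ‖R⁻¹ • z‖ = ‖z‖ / R := fun z => by
    rw [norm_smul_of_nonneg (inv_nonneg.2 hR.le), inv_mul_eq_div]
  have := h (x := R⁻¹ • x) (by rwa [hscale, div_le_one hR]) (y := R⁻¹ • y)
    (by rwa [hscale, div_le_one hR]) (by rwa [← smul_sub, hscale, le_div_iff₀ hR])
  rwa [← smul_add, hscale, div_le_iff₀ hR] at this

theorem tendsto_sub_nhds_zero_of_two_mul_le_norm_add {a b : ℕ → E} {d : ℝ}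
    (ha : Tendsto (fun n => ‖a n‖) atTop (𝓝 d)) (hb : Tendsto (fun n => ‖b n‖) atTop (𝓝 d))
    (hab : ∀ n, 2 * d ≤ ‖a n + b n‖) : Tendsto (fun n => a n - b n) atTop (𝓝 0) := by
  rcases (ge_of_tendsto' ha fun n => norm_nonneg _).eq_or_lt with rfl | hd
  · refine squeeze_zero_norm (fun n => norm_sub_le _ _) ?_
    simpa using ha.add hb
  rw [NormedAddGroup.tendsto_nhds_zero]
  intro ε hε
  obtain ⟨δ, hδ, huc⟩ := exists_forall_norm_add_le_two_sub_mul (E := E)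
    (div_pos hε (by positivity : (0 : ℝ) < 2 * d))
  set t := min 1 (δ / 4)
  have ht : 0 < t := by positivity
  have ht1 : t ≤ 1 := min_le_left _ _
  have htδ : t ≤ δ / 4 := min_le_right _ _
  have hR : d < d * (1 + t) := by nlinarith
  filter_upwards [ha.eventually_le_const hR, hb.eventually_le_const hR] with n han hbn
  by_contra! hεn
  have hscaled : ε / (2 * d) * (d * (1 + t)) ≤ ε := by
    rw [div_mul_eq_mul_div, div_le_iff₀ (by positivity)]
    exact mul_le_mul_of_nonneg_left (by nlinarith) hε.le
  have := huc (by positivity) han hbn (hscaled.trans hεn)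
  nlinarith [hab n]

end UniformConvexity

section Sequences

variable {E : Type*} [SeminormedAddCommGroup E]

theorem antitone_norm_succ_sub_of_two_mul_le {u : ℕ → E}
    (h : ∀ n, 2 * ‖u (n + 2) - u (n + 1)‖ ≤ ‖u (n + 2) - u n‖) :
    Antitone fun n => ‖u (n + 1) - u n‖ := by
  refine antitone_nat_of_succ_le fun n => ?_
  show ‖u (n + 2) - u (n + 1)‖ ≤ ‖u (n + 1) - u n‖
  linarith [h n, norm_sub_le_norm_sub_add_norm_sub (u (n + 2)) (u (n + 1)) (u n)]

theorem norm_sub_le_mul_of_antitone {u : ℕ → E} (h : Antitone fun n => ‖u (n + 1) - u n‖)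
    (n : ℕ) : ‖u n - u 0‖ ≤ n * ‖u 1 - u 0‖ := by
  rw [← Finset.sum_range_sub]
  calc ‖∑ i ∈ Finset.range n, (u (i + 1) - u i)‖
      ≤ ∑ i ∈ Finset.range n, ‖u (i + 1) - u i‖ := norm_sum_le _ _
    _ ≤ ∑ _i ∈ Finset.range n, ‖u 1 - u 0‖ := Finset.sum_le_sum fun i _ => h (Nat.zero_le i)
    _ = n * ‖u 1 - u 0‖ := by simp

theorem tendsto_sum_range_sub_nsmul {v : ℕ → E}
    (h : Tendsto (fun n => v (n + 1) - v n) atTop (𝓝 0)) (k : ℕ) :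
    Tendsto (fun n => ∑ i ∈ Finset.range k, v (n + i) - k • v n) atTop (𝓝 0) := by
  have hshift : ∀ i, Tendsto (fun n => v (n + i) - v n) atTop (𝓝 0) := by
    intro i
    induction i with
    | zero => simpa using tendsto_const_nhds
    | succ i ih => simpa [← add_assoc] using (h.comp (tendsto_add_atTop_nat i)).add ih
  simpa [Finset.sum_sub_distrib] using tendsto_finsetSum (Finset.range k) fun i _ => hshift i

theorem tendsto_div_natCast_nhds_zero_of_forall_le_add_mul {f : ℕ → ℝ} (hf : ∀ n, 0 ≤ f n)
    (h : ∀ ε > 0, ∃ B, ∀ᶠ n in atTop, f n ≤ B + ε * n) :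
    Tendsto (fun n => f n / n) atTop (𝓝 0) := by
  refine tendsto_order.2 ⟨fun a ha => Eventually.of_forall fun n =>
    ha.trans_le (div_nonneg (hf n) n.cast_nonneg), fun a ha => ?_⟩
  obtain ⟨B, hB⟩ := h (a / 2) (half_pos ha)
  filter_upwards [hB, (tendsto_const_div_atTop_nhds_zero_nat B).eventually_lt_const (half_pos ha),
    eventually_gt_atTop 0] with n hn hBn hn0
  have hn' : (0 : ℝ) < n := Nat.cast_pos.2 hn0
  calc f n / n ≤ (B + a / 2 * n) / n := by gcongr
    _ = B / n + a / 2 := by field_simp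
    _ < a := by linarith

end Sequences

section AsymptoticRegularity

variable {E : Type*} [NormedAddCommGroup E] [NormedSpace ℝ E] [UniformConvexSpace E]

theorem tendsto_norm_succ_sub_of_tendsto_norm_div {u : ℕ → E}
    (hhalf : ∀ n, 2 * ‖u (n + 2) - u (n + 1)‖ ≤ ‖u (n + 2) - u n‖)
    (hanti : ∀ k, 2 ≤ k → Antitone fun n => ‖u (n + k) - u n‖)
    (hsub : Tendsto (fun n : ℕ => ‖u n‖ / n) atTop (𝓝 0)) :
    Tendsto (fun n => ‖u (n + 1) - u n‖) atTop (𝓝 0) := by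
  set v : ℕ → E := fun n => u (n + 1) - u n with hv
  have hbdd : BddBelow (Set.range fun n => ‖v n‖) := ⟨0, by rintro _ ⟨n, rfl⟩; positivity⟩
  have hlim : Tendsto (fun n => ‖v n‖) atTop (𝓝 (⨅ n, ‖v n‖)) :=
    tendsto_atTop_ciInf (antitone_norm_succ_sub_of_two_mul_le hhalf) hbdd
  set d := ⨅ n, ‖v n‖
  -- Uniform convexity forces consecutive steps to align once their lengths stabilise at `d`.
  have hconsec : Tendsto (fun n => v (n + 1) - v n) atTop (𝓝 0) := by
    refine tendsto_sub_nhds_zero_of_two_mul_le_norm_add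
      (hlim.comp (tendsto_add_atTop_nat 1)) hlim fun n => ?_
    have hsum : v (n + 1) + v n = u (n + 2) - u n := by simp only [hv]; abel
    rw [hsum]
    linarith [hhalf n, ciInf_le hbdd (n + 1)]
  -- Hence `k` consecutive steps span a distance close to `k * d`.
  have hkd : ∀ k, 2 ≤ k → k * d ≤ ‖u k - u 0‖ := by
    intro k hk
    have hlow : Tendsto (fun n => k * ‖v n‖ - ‖∑ i ∈ Finset.range k, v (n + i) - k • v n‖)
        atTop (𝓝 (k * d)) := by
      simpa using (hlim.const_mul (k : ℝ)).sub (tendsto_sum_range_sub_nsmul hconsec k).norm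
    refine le_of_tendsto' hlow fun n => ?_
    have htel : ∑ i ∈ Finset.range k, v (n + i) = u (n + k) - u n := by
      simpa [hv, add_assoc] using Finset.sum_range_sub (fun i => u (n + i)) k
    have hnorm := norm_sub_norm_le (k • v n) (∑ i ∈ Finset.range k, v (n + i))
    rw [RCLike.norm_nsmul ℝ, nsmul_eq_mul, norm_sub_rev (k • v n)] at hnorm
    rw [htel] at hnorm ⊢
    have hstart : ‖u (n + k) - u n‖ ≤ ‖u (0 + k) - u 0‖ := hanti k hk (Nat.zero_le n)
    rw [zero_add] at hstart
    linarith
  have hd0 : d ≤ 0 := by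
    refine ge_of_tendsto (by simpa using hsub.add (tendsto_const_div_atTop_nhds_zero_nat ‖u 0‖))
      ((eventually_ge_atTop 2).mono fun k hk => ?_)
    have hk0 : (0 : ℝ) < k := by exact_mod_cast (by omega : 0 < k)
    rw [← add_div, le_div_iff₀ hk0, mul_comm]
    linarith [hkd k hk, norm_sub_le (u k) (u 0)]
  rwa [le_antisymm hd0 (le_ciInf fun n => norm_nonneg _)] at hlim

end AsymptoticRegularity

section AsymptoticCenter

variable {E : Type*} [NormedAddCommGroup E] {c : ℕ → E}

/-- For unbounded `c` the real `limsup` below is a junk value; every lemma assumes `c` bounded. -/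
noncomputable def asymptoticRadius (c : ℕ → E) (y : E) : ℝ :=
  limsup (fun j => ‖c j - y‖) atTop

theorem isBoundedUnder_norm_sub (hc : IsBoundedUnder (· ≤ ·) atTop fun j => ‖c j‖) (y : E) :
    IsBoundedUnder (· ≤ ·) atTop fun j => ‖c j - y‖ :=
  (isBoundedUnder_le_add hc isBoundedUnder_const).mono_le
    (Eventually.of_forall fun _ => norm_sub_le _ _)

theorem asymptoticRadius_nonneg (hc : IsBoundedUnder (· ≤ ·) atTop fun j => ‖c j‖) (y : E) :
    0 ≤ asymptoticRadius c y :=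
  le_limsup_of_frequently_le (Frequently.of_forall fun _ => norm_nonneg _)
    (isBoundedUnder_norm_sub hc y)

theorem asymptoticRadius_le_of_norm_sub_le (hc : IsBoundedUnder (· ≤ ·) atTop fun j => ‖c j‖)
    {y z : E} {e : ℕ → ℝ} {e₀ : ℝ} (he : Tendsto e atTop (𝓝 e₀))
    (h : ∀ j, ‖c j - y‖ ≤ ‖c j - z‖ + e j) :
    asymptoticRadius c y ≤ asymptoticRadius c z + e₀ :=
  calc asymptoticRadius c y ≤ limsup ((fun j => ‖c j - z‖) + e) atTop :=
        limsup_le_limsup (Eventually.of_forall h)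
          (isCoboundedUnder_le_of_le atTop fun _ => norm_nonneg _)
          (isBoundedUnder_le_add (isBoundedUnder_norm_sub hc z) he.isBoundedUnder_le)
    _ ≤ asymptoticRadius c z + limsup e atTop :=
        limsup_add_le (isBoundedUnder_of ⟨0, fun _ => norm_nonneg _⟩)
          (isBoundedUnder_norm_sub hc z) he.isCoboundedUnder_le he.isBoundedUnder_le
    _ = asymptoticRadius c z + e₀ := by rw [he.limsup_eq]

theorem lipschitzWith_asymptoticRadius (hc : IsBoundedUnder (· ≤ ·) atTop fun j => ‖c j‖) :
    LipschitzWith 1 (asymptoticRadius c) :=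
  LipschitzWith.of_le_add fun y z => by
    simpa [dist_eq_norm, norm_sub_rev z y] using asymptoticRadius_le_of_norm_sub_le hc
      tendsto_const_nhds fun j => norm_sub_le_norm_sub_add_norm_sub (c j) z y

theorem norm_sub_le_asymptoticRadius_add (hc : IsBoundedUnder (· ≤ ·) atTop fun j => ‖c j‖)
    (y z : E) : ‖y - z‖ ≤ asymptoticRadius c y + asymptoticRadius c z := by
  refine (le_limsup_of_frequently_le (u := (fun j => ‖c j - y‖) + fun j => ‖c j - z‖)
    (Frequently.of_forall fun j => ?_)
    (isBoundedUnder_le_add (isBoundedUnder_norm_sub hc y) (isBoundedUnder_norm_sub hc z))).trans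
    (limsup_add_le (isBoundedUnder_of ⟨0, fun _ => norm_nonneg _⟩) (isBoundedUnder_norm_sub hc y)
      (isCoboundedUnder_le_of_le atTop fun _ => norm_nonneg _) (isBoundedUnder_norm_sub hc z))
  simpa [norm_sub_rev y] using norm_sub_le_norm_sub_add_norm_sub y (c j) z

variable [NormedSpace ℝ E] [UniformConvexSpace E]

theorem exists_asymptoticRadius_midpoint_le (hc : IsBoundedUnder (· ≤ ·) atTop fun j => ‖c j‖)
    {ε : ℝ} (hε : 0 < ε) :
    ∃ δ, 0 < δ ∧ ∀ ⦃R : ℝ⦄, 0 < R → ∀ ⦃p q : E⦄, asymptoticRadius c p < R →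
      asymptoticRadius c q < R → ε * R ≤ ‖p - q‖ →
        asymptoticRadius c (midpoint ℝ p q) ≤ (1 - δ / 2) * R := by
  obtain ⟨δ, hδ, huc⟩ := exists_forall_norm_add_le_two_sub_mul (E := E) hε
  refine ⟨δ, hδ, fun R hR p q hp hq hpq => ?_⟩
  refine limsup_le_of_le (isCoboundedUnder_le_of_le atTop fun _ => norm_nonneg _) ?_
  filter_upwards [eventually_lt_of_limsup_lt hp (isBoundedUnder_norm_sub hc p),
    eventually_lt_of_limsup_lt hq (isBoundedUnder_norm_sub hc q)] with j hjp hjq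
  have hsplit : c j - midpoint ℝ p q = (1 / 2 : ℝ) • ((c j - p) + (c j - q)) := by
    rw [midpoint_eq_smul_add, invOf_eq_inv]; module
  have := huc hR hjp.le hjq.le (by rwa [sub_sub_sub_cancel_left, norm_sub_rev])
  rw [hsplit, norm_smul_of_nonneg (by norm_num)]
  linarith

theorem exists_pos_norm_sub_lt_of_asymptoticRadius_lt
    (hc : IsBoundedUnder (· ≤ ·) atTop fun j => ‖c j‖) {C : Set E} (hC : Convex ℝ C) {r : ℝ}
    (hr : ∀ y ∈ C, r ≤ asymptoticRadius c y) {ε : ℝ} (hε : 0 < ε) :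
    ∃ η, 0 < η ∧ ∀ p ∈ C, ∀ q ∈ C, asymptoticRadius c p < r + η →
      asymptoticRadius c q < r + η → ‖p - q‖ < ε := by
  rcases le_or_gt r 0 with hr0 | hr0
  · refine ⟨ε / 2, half_pos hε, fun p _ q _ hp hq => ?_⟩
    linarith [norm_sub_le_asymptoticRadius_add hc p q]
  obtain ⟨δ, hδ, hmid⟩ := exists_asymptoticRadius_midpoint_le hc
    (div_pos hε (by linarith : (0 : ℝ) < r + 1))
  set η := min 1 (δ * r / 4)
  have hη1 : η ≤ 1 := min_le_left _ _
  have hηr : η ≤ δ * r / 4 := min_le_right _ _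
  have hη : 0 < η := by positivity
  refine ⟨η, hη, fun p hp q hq hAp hAq => ?_⟩
  by_contra! hpq
  have hscaled : ε / (r + 1) * (r + η) ≤ ‖p - q‖ := by
    refine le_trans ?_ hpq
    rw [div_mul_eq_mul_div, div_le_iff₀ (by linarith)]
    exact mul_le_mul_of_nonneg_left (by linarith) hε.le
  have hlt := hmid (by positivity) hAp hAq hscaled
  have hge := hr _ (hC.midpoint_mem hp hq)
  nlinarith [mul_pos hδ hη]

variable [CompleteSpace E]

theorem exists_isMinOn_asymptoticRadius (hc : IsBoundedUnder (· ≤ ·) atTop fun j => ‖c j‖)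
    {C : Set E} (hne : C.Nonempty) (hCc : IsClosed C) (hC : Convex ℝ C) :
    ∃ z ∈ C, IsMinOn (asymptoticRadius c) C z := by
  have hbdd : BddBelow (asymptoticRadius c '' C) :=
    ⟨0, by rintro _ ⟨y, -, rfl⟩; exact asymptoticRadius_nonneg hc y⟩
  set r := sInf (asymptoticRadius c '' C)
  have hr : ∀ y ∈ C, r ≤ asymptoticRadius c y := fun y hy => csInf_le hbdd ⟨y, hy, rfl⟩
  obtain ⟨a, -, ha, haC⟩ := exists_seq_tendsto_sInf (hne.image _) hbdd
  choose y hyC hya using haC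
  have hy : Tendsto (fun n => asymptoticRadius c (y n)) atTop (𝓝 r) := by simpa [hya] using ha
  have hcauchy : CauchySeq y := Metric.cauchySeq_iff'.2 fun ε hε => by
    obtain ⟨η, hη, hclose⟩ := exists_pos_norm_sub_lt_of_asymptoticRadius_lt hc hC hr hε
    obtain ⟨N, hN⟩ := eventually_atTop.1 (hy.eventually_lt_const (lt_add_of_pos_right r hη))
    exact ⟨N, fun n hn => by
      rw [dist_eq_norm]; exact hclose _ (hyC n) _ (hyC N) (hN n hn) (hN N le_rfl)⟩
  obtain ⟨z, hz⟩ := cauchySeq_tendsto_of_complete hcauchy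
  have hzr : asymptoticRadius c z = r :=
    tendsto_nhds_unique (((lipschitzWith_asymptoticRadius hc).continuous.tendsto z).comp hz) hy
  exact ⟨z, hCc.mem_of_tendsto hz (Eventually.of_forall hyC),
    isMinOn_iff.2 fun y hy => hzr ▸ hr y hy⟩

end AsymptoticCenter

section Chatterjea

variable {E : Type*} [NormedAddCommGroup E]

def ChatterjeaOn (T : E → E) (C : Set E) : Prop :=
  ∀ x ∈ C, ∀ y ∈ C, ‖T x - T y‖ ≤ (1 / 2) * (‖T x - y‖ + ‖T y - x‖)

namespace ChatterjeaOn

variable {T : E → E} {C : Set E}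

theorem two_mul_norm_iterate_sub_le (hT : ChatterjeaOn T C) (hmaps : Set.MapsTo T C C) {x : E}
    (hx : x ∈ C) (n : ℕ) : 2 * ‖T^[n + 2] x - T^[n + 1] x‖ ≤ ‖T^[n + 2] x - T^[n] x‖ := by
  have := hT _ (hmaps.iterate n hx) _ (hmaps.iterate (n + 1) hx)
  simp only [← iterate_succ_apply' T, sub_self, norm_zero, zero_add] at this
  rw [norm_sub_rev] at this
  linarith

theorem norm_iterate_sub_le (hT : ChatterjeaOn T C) (hmaps : Set.MapsTo T C C) {y : E}
    (hy : y ∈ C) (n : ℕ) : ‖T^[n] y - y‖ ≤ n * ‖T y - y‖ := by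
  have hanti : Antitone fun n => ‖T^[n + 1] y - T^[n] y‖ :=
    antitone_norm_succ_sub_of_two_mul_le (u := fun n => T^[n] y)
      (hT.two_mul_norm_iterate_sub_le hmaps hy)
  simpa using norm_sub_le_mul_of_antitone (u := fun n => T^[n] y) hanti n

theorem norm_sub_apply_le (hT : ChatterjeaOn T C) {y z : E} (hy : y ∈ C) (hz : z ∈ C) :
    ‖y - T z‖ ≤ ‖y - z‖ + 3 * ‖T y - y‖ := by
  have := hT y hy z hz
  have h₁ := norm_sub_le_norm_sub_add_norm_sub y (T y) (T z)
  have h₂ := norm_sub_le_norm_sub_add_norm_sub (T y) y z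
  rw [norm_sub_rev (T z), norm_sub_rev y (T y)] at *
  linarith

theorem tendsto_norm_iterate_div [NormedSpace ℝ E] (hT : ChatterjeaOn T C)
    (hmaps : Set.MapsTo T C C) {k₀ : ℕ} {M : ℝ}
    (hM : ∀ n, k₀ ≤ n → ∀ x ∈ C, ∀ y ∈ C, ‖T^[n] x - T^[n] y‖ ≤ M * ‖x - y‖)
    (h0 : (0 : E) ∈ closure {y : E | ∃ x ∈ C, y = x - T x}) {x : E} (hx : x ∈ C) :
    Tendsto (fun n : ℕ => ‖T^[n] x‖ / n) atTop (𝓝 0) := by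
  refine tendsto_div_natCast_nhds_zero_of_forall_le_add_mul (fun n => norm_nonneg _)
    fun ε hε => ?_
  obtain ⟨_, ⟨y, hy, rfl⟩, hyε⟩ := Metric.mem_closure_iff.1 h0 ε hε
  rw [dist_zero_left, norm_sub_rev] at hyε
  refine ⟨M * ‖x - y‖ + ‖y‖, (eventually_ge_atTop k₀).mono fun n hn => ?_⟩
  have horbit := hT.norm_iterate_sub_le hmaps hy n
  have := norm_sub_le_norm_sub_add_norm_sub (T^[n] x) (T^[n] y) y
  have := mul_le_mul_of_nonneg_left hyε.le n.cast_nonneg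
  linarith [hM n hn x hx y hy, norm_le_insert' (T^[n] x) y]

theorem tendsto_norm_iterate_succ_sub [NormedSpace ℝ E] [UniformConvexSpace E]
    (hT : ChatterjeaOn T C) (hmaps : Set.MapsTo T C C) {x : E} (hx : x ∈ C)
    (hH1 : ∀ k, 2 ≤ k → Antitone fun n : ℕ => ‖T^[n + k] x - T^[n] x‖)
    (hsub : Tendsto (fun n : ℕ => ‖T^[n] x‖ / n) atTop (𝓝 0)) :
    Tendsto (fun n => ‖T^[n + 1] x - T^[n] x‖) atTop (𝓝 0) :=
  tendsto_norm_succ_sub_of_tendsto_norm_div (u := fun n => T^[n] x)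
    (hT.two_mul_norm_iterate_sub_le hmaps hx) hH1 hsub

variable [NormedSpace ℝ E] [UniformConvexSpace E] [CompleteSpace E]

theorem exists_isFixedPt_of_tendsto (hT : ChatterjeaOn T C) (hCc : IsClosed C)
    (hC : Convex ℝ C) (hmaps : Set.MapsTo T C C) {c : ℕ → E} (hcC : ∀ j, c j ∈ C)
    (hc : IsBoundedUnder (· ≤ ·) atTop fun j => ‖c j‖)
    (hTc : Tendsto (fun j => ‖T (c j) - c j‖) atTop (𝓝 0)) : ∃ z ∈ C, IsFixedPt T z := by
  obtain ⟨z, hz, hmin⟩ := exists_isMinOn_asymptoticRadius hc ⟨c 0, hcC 0⟩ hCc hC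
  refine ⟨z, hz, ?_⟩
  have hTz : asymptoticRadius c (T z) ≤ asymptoticRadius c z := by
    simpa using asymptoticRadius_le_of_norm_sub_le hc (hTc.const_mul 3)
      fun j => hT.norm_sub_apply_le (hcC j) hz
  by_contra hne
  obtain ⟨η, hη, hclose⟩ := exists_pos_norm_sub_lt_of_asymptoticRadius_lt hc hC
    (isMinOn_iff.1 hmin) (norm_sub_pos_iff.2 hne)
  exact lt_irrefl _ (hclose _ (hmaps hz) _ hz (by linarith) (by linarith))

theorem exists_isFixedPt_of_frequently_norm_iterate_le (hT : ChatterjeaOn T C)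
    (hCc : IsClosed C) (hC : Convex ℝ C) (hmaps : Set.MapsTo T C C) {x : E} (hx : x ∈ C)
    (hreg : Tendsto (fun n => ‖T^[n + 1] x - T^[n] x‖) atTop (𝓝 0)) {R : ℝ}
    (hR : ∃ᶠ n in atTop, ‖T^[n] x‖ ≤ R) : ∃ z ∈ C, IsFixedPt T z := by
  obtain ⟨φ, hφ, hφR⟩ := extraction_of_frequently_atTop hR
  refine hT.exists_isFixedPt_of_tendsto hCc hC hmaps (c := fun j => T^[φ j] x)
    (fun j => hmaps.iterate _ hx) (isBoundedUnder_of ⟨R, hφR⟩) ?_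
  simpa only [iterate_succ_apply', comp_def] using hreg.comp hφ.tendsto_atTop

end ChatterjeaOn

end Chatterjea

/-- For a Chatterjea mapping on a nonempty closed convex subset of a
uniformly convex real Banach space satisfying (H1) and (H2), `0` belongs to the closure
of `R(I - T)` but not to `R(I - T)` itself iff every orbit escapes to infinity in norm
while growing sublinearly. -/
theorem zero_mem_closure_not_range_iff
    {X : Type*} [NormedAddCommGroup X] [NormedSpace ℝ X] [CompleteSpace X]
    [UniformConvexSpace X]
    (C : Set X) (hne : C.Nonempty) (hclosed : IsClosed C) (hconv : Convex ℝ C)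
    (T : X → X) (hT : Set.MapsTo T C C)
    (hchat : ∀ x ∈ C, ∀ y ∈ C,
      ‖T x - T y‖ ≤ (1 / 2) * (‖T x - y‖ + ‖T y - x‖))
    (hH1 : ∀ x ∈ C, ∀ k : ℕ, 2 ≤ k →
      Antitone fun n : ℕ => ‖T^[n + k] x - T^[n] x‖)
    (hH2 : ∃ k₀ : ℕ, 1 ≤ k₀ ∧ ∃ M : ℝ, ∀ n : ℕ, k₀ ≤ n →
      ∀ x ∈ C, ∀ y ∈ C, ‖T^[n] x - T^[n] y‖ ≤ M * ‖x - y‖) :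
    ((0 : X) ∈ closure {y : X | ∃ x ∈ C, y = x - T x} ∧
        (0 : X) ∉ {y : X | ∃ x ∈ C, y = x - T x}) ↔
      ∀ x ∈ C,
        Filter.Tendsto (fun n : ℕ => ‖T^[n] x‖) Filter.atTop Filter.atTop ∧
        Filter.Tendsto (fun n : ℕ => ‖T^[n] x‖ / n) Filter.atTop (nhds 0) := by
  have hchat : ChatterjeaOn T C := hchat
  have hreg := fun x hx => hchat.tendsto_norm_iterate_succ_sub hT hx (hH1 x hx)
  constructor
  · rintro ⟨hcl, hnot⟩ x hx
    obtain ⟨k₀, -, M, hM⟩ := hH2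
    have hsub := hchat.tendsto_norm_iterate_div hT hM hcl hx
    refine ⟨?_, hsub⟩
    by_contra hunbdd
    obtain ⟨R, hR⟩ : ∃ R, ∃ᶠ n in atTop, ‖T^[n] x‖ ≤ R := by
      simp only [tendsto_atTop, not_forall, not_eventually, not_le] at hunbdd
      exact hunbdd.imp fun R hR => hR.mono fun n => le_of_lt
    obtain ⟨z, hz, hTz⟩ := hchat.exists_isFixedPt_of_frequently_norm_iterate_le hclosed hconv hT
      hx (hreg x hx hsub) hR
    exact hnot ⟨z, hz, by rw [hTz.eq, sub_self]⟩
  · intro h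
    obtain ⟨x₀, hx₀⟩ := hne
    have hsteps : Tendsto (fun n => T^[n] x₀ - T^[n + 1] x₀) atTop (𝓝 0) :=
      tendsto_zero_iff_norm_tendsto_zero.2 <|
        (hreg x₀ hx₀ (h x₀ hx₀).2).congr fun n => norm_sub_rev _ _
    refine ⟨mem_closure_of_tendsto hsteps (Eventually.of_forall fun n =>
      ⟨T^[n] x₀, hT.iterate n hx₀, by rw [iterate_succ_apply']⟩), ?_⟩
    rintro ⟨z, hz, hz0⟩
    have hfix : IsFixedPt T z := (sub_eq_zero.1 hz0.symm).symm
    refine not_tendsto_atTop_of_tendsto_nhds (a := ‖z‖) ?_ (h z hz).1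
    exact tendsto_const_nhds.congr fun n => by rw [(hfix.iterate n).eq]
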